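/- arXiv:2501.02323 — 2 statements merged into one kernel-verified Lean document; each statement's English description precedes it below -/
import Mathlib

section
/- Let x' be a 0–1 sequence with associated real x, and let p ≥ 1. Then the following are equivalent: (a) x'(4m+1) = 0 and x'(4m+3) = 1 for all m ∈ ℕ, and x'(p) = 0; (b) for all m ∈ ℕ, [x, 4m+1] holds and [x, 4m+3] fails, and [x, p] holds. -/
/-- `x'` is a 0–1 sequence: defined on positive integers with values in {0,1}. -/
def IsZeroOne (x' : ℕ → ℕ) : Prop := ∀ i, 1 ≤ i → x' i = 0 ∨ x' i = 1

/-- The real number associated to a 0–1 sequence: `Σ_{i=1}^∞ x'(i)·2^{-i}`. -/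
noncomputable def assocReal (x' : ℕ → ℕ) : ℝ := ∑' i : ℕ, (x' (i + 1) : ℝ) / 2 ^ (i + 1)

/-- A real `y` is `p`-rational if `y·2^p` is a natural number. -/
def IsPRational (p : ℕ) (y : ℝ) : Prop := ∃ q : ℕ, y * 2 ^ p = (q : ℝ)

/-- The predicate `[x, p]` (for `p ≥ 1`): there is a `(p-1)`-rational `y` with
`0 < x - y < 1/2^p`. -/
def BracketPred (x : ℝ) (p : ℕ) : Prop :=
  ∃ y : ℝ, IsPRational (p - 1) y ∧ 0 < x - y ∧ x - y < 1 / 2 ^ p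

/-- A 0–1 sequence is alternating if `x'(4m+1) = 0` and `x'(4m+3) = 1` for all `m`. -/
def Alternating (x' : ℕ → ℕ) : Prop := ∀ m : ℕ, x' (4 * m + 1) = 0 ∧ x' (4 * m + 3) = 1

/-!
Write `x·2^k = N + t`, where the integer `N` is formed by the first `k` digits (so `N ≡ x'(k)`
mod 2) and `t ∈ [0, 1]` is the value of the remaining digits. Then `[x, k]` says that `x·2^k`
lies strictly between an even integer and the next odd one, i.e. `x'(k) = 0` and `0 < t < 1`;
and `0 < t < 1` means that some later digit is `1` and some later digit is `0`. So both sides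
of the equivalence are statements about digits. Under (a), the digits `x'(4m+3) = 1` and
`x'(4m+5) = 0` provide later digits of both kinds beyond every position. Under (b), `[x, 4m+5]`
provides them beyond `4m+3`, so `¬[x, 4m+3]` forces `x'(4m+3) = 1`.
-/

namespace IsZeroOne

variable {x' : ℕ → ℕ}

lemma le_one (hx' : IsZeroOne x') {i : ℕ} (hi : 1 ≤ i) : x' i ≤ 1 := by
  rcases hx' i hi with h | h <;> omega

lemma shift (hx' : IsZeroOne x') (k : ℕ) : IsZeroOne (fun i => x' (i + k)) :=
  fun i hi => hx' (i + k) (by omega)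

lemma compl (hx' : IsZeroOne x') : IsZeroOne (fun i => 1 - x' i) := by
  intro i hi
  rcases hx' i hi with h | h <;> simp [h]

lemma summable (hx' : IsZeroOne x') :
    Summable (fun i : ℕ => (x' (i + 1) : ℝ) / 2 ^ (i + 1)) := by
  refine (summable_geometric_two' 1).of_nonneg_of_le (fun i => by positivity) fun i => ?_
  have hle : (x' (i + 1) : ℝ) ≤ 1 := by exact_mod_cast hx'.le_one (by omega)
  calc (x' (i + 1) : ℝ) / 2 ^ (i + 1) ≤ 1 / 2 ^ (i + 1) := by gcongr
    _ = 1 / 2 / 2 ^ i := by rw [pow_succ]; ring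

end IsZeroOne

lemma assocReal_nonneg (x' : ℕ → ℕ) : 0 ≤ assocReal x' :=
  tsum_nonneg fun i => by positivity

lemma assocReal_add_assocReal_compl {x' : ℕ → ℕ} (hx' : IsZeroOne x') :
    assocReal x' + assocReal (fun i => 1 - x' i) = 1 := by
  unfold assocReal
  rw [← hx'.summable.tsum_add hx'.compl.summable, ← tsum_geometric_two' 1]
  congr 1 with i
  have hle := hx'.le_one (i := i + 1) (by omega)
  push_cast [hle]
  rw [pow_succ]
  ring

lemma assocReal_le_one {x' : ℕ → ℕ} (hx' : IsZeroOne x') : assocReal x' ≤ 1 := by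
  linarith [assocReal_add_assocReal_compl hx', assocReal_nonneg (fun i => 1 - x' i)]

lemma assocReal_pos_iff {x' : ℕ → ℕ} (hx' : IsZeroOne x') :
    0 < assocReal x' ↔ ∃ i, 1 ≤ i ∧ x' i = 1 := by
  constructor
  · intro hpos
    by_contra! hzero
    have hterms : ∀ i : ℕ, (x' (i + 1) : ℝ) / 2 ^ (i + 1) = 0 := fun i => by
      rcases hx' (i + 1) (by omega) with h | h
      · simp [h]
      · exact absurd h (hzero (i + 1) (by omega))
    simp [assocReal, hterms] at hpos
  · rintro ⟨i, hi, h⟩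
    obtain ⟨j, rfl⟩ : ∃ j, i = j + 1 := ⟨i - 1, by omega⟩
    exact hx'.summable.tsum_pos (fun _ => by positivity) j (by simp [h])

lemma assocReal_lt_one_iff {x' : ℕ → ℕ} (hx' : IsZeroOne x') :
    assocReal x' < 1 ↔ ∃ i, 1 ≤ i ∧ x' i = 0 := by
  have hsum := assocReal_add_assocReal_compl hx'
  have hcompl : ∀ i, 1 ≤ i → (1 - x' i = 1 ↔ x' i = 0) := fun i hi => by
    have := hx'.le_one hi
    omega
  have hcompl_pos : assocReal x' < 1 ↔ 0 < assocReal (fun i => 1 - x' i) := by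
    constructor <;> intro <;> linarith
  rw [hcompl_pos, assocReal_pos_iff hx'.compl]
  exact exists_congr fun i => and_congr_right fun hi => hcompl i hi

lemma assocReal_mul_two {x' : ℕ → ℕ} (hx' : IsZeroOne x') :
    assocReal x' * 2 = x' 1 + assocReal (fun i => x' (i + 1)) := by
  unfold assocReal
  rw [hx'.summable.tsum_eq_zero_add, add_mul, ← tsum_mul_right]
  congr 1
  · simp
  · congr 1 with i
    rw [pow_succ _ (i + 1)]
    field_simp

lemma exists_assocReal_mul_two_pow {x' : ℕ → ℕ} (hx' : IsZeroOne x') (k : ℕ) :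
    ∃ M : ℕ, assocReal x' * 2 ^ (k + 1) =
      2 * M + x' (k + 1) + assocReal (fun i => x' (i + (k + 1))) := by
  induction k with
  | zero => exact ⟨0, by simpa using assocReal_mul_two hx'⟩
  | succ k ih =>
    obtain ⟨M, hM⟩ := ih
    have hstep := assocReal_mul_two (hx'.shift (k + 1))
    have hshift : (fun i => x' (i + 1 + (k + 1))) = fun i => x' (i + (k + 1 + 1)) := by
      funext i; congr 1; omega
    rw [hshift, show 1 + (k + 1) = k + 1 + 1 by omega] at hstep
    refine ⟨2 * M + x' (k + 1), ?_⟩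
    rw [pow_succ, ← mul_assoc, hM]
    push_cast
    linarith

lemma exists_two_mul_lt_lt_two_mul_add_one_iff {n : ℕ} {t : ℝ} (ht₀ : 0 ≤ t) (ht₁ : t ≤ 1) :
    (∃ q : ℕ, 2 * (q : ℝ) < n + t ∧ n + t < 2 * q + 1) ↔ Even n ∧ 0 < t ∧ t < 1 := by
  constructor
  · rintro ⟨q, hlow, hhigh⟩
    have hn : n = 2 * q := by
      have h₁ : (2 * q : ℝ) < n + 1 := by linarith
      have h₂ : (n : ℝ) < 2 * q + 1 := by linarith
      have h₁' : 2 * q < n + 1 := by exact_mod_cast h₁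
      have h₂' : n < 2 * q + 1 := by exact_mod_cast h₂
      omega
    subst hn
    push_cast at hlow hhigh
    exact ⟨even_two_mul q, by linarith, by linarith⟩
  · rintro ⟨⟨q, rfl⟩, ht₀, ht₁⟩
    exact ⟨q, by push_cast; linarith, by push_cast; linarith⟩

lemma bracketPred_iff {x : ℝ} {k : ℕ} (hk : 1 ≤ k) :
    BracketPred x k ↔ ∃ q : ℕ, 2 * (q : ℝ) < x * 2 ^ k ∧ x * 2 ^ k < 2 * q + 1 := by
  obtain ⟨j, rfl⟩ : ∃ j, k = j + 1 := ⟨k - 1, by omega⟩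
  have h2j : (0 : ℝ) < 2 ^ j := by positivity
  have h2j' : (0 : ℝ) < 2 ^ (j + 1) := by positivity
  have hrational (y : ℝ) (q : ℕ) : y * 2 ^ j = q ↔ y = q / 2 ^ j := (eq_div_iff h2j.ne').symm
  have hscale (q : ℕ) : (0 < x - q / 2 ^ j ∧ x - q / 2 ^ j < 1 / 2 ^ (j + 1)) ↔
      2 * (q : ℝ) < x * 2 ^ (j + 1) ∧ x * 2 ^ (j + 1) < 2 * q + 1 := by
    have hdiff : x - q / 2 ^ j = (x * 2 ^ (j + 1) - 2 * q) / 2 ^ (j + 1) := by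
      field_simp
      ring
    rw [hdiff, div_pos_iff_of_pos_right h2j', div_lt_div_iff_of_pos_right h2j', sub_pos,
      sub_lt_iff_lt_add']
  simp only [BracketPred, IsPRational, Nat.add_sub_cancel, hrational]
  constructor
  · rintro ⟨_, ⟨q, rfl⟩, h⟩
    exact ⟨q, (hscale q).1 h⟩
  · rintro ⟨q, h⟩
    exact ⟨_, ⟨q, rfl⟩, (hscale q).2 h⟩

lemma exists_one_le_shift_eq_iff {x' : ℕ → ℕ} {k d : ℕ} :
    (∃ i, 1 ≤ i ∧ x' (i + k) = d) ↔ ∃ j, k < j ∧ x' j = d := by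
  constructor
  · rintro ⟨i, hi, h⟩
    exact ⟨i + k, by omega, h⟩
  · rintro ⟨j, hj, h⟩
    exact ⟨j - k, by omega, by rwa [Nat.sub_add_cancel hj.le]⟩

theorem bracketPred_assocReal_iff {x' : ℕ → ℕ} (hx' : IsZeroOne x') {k : ℕ} (hk : 1 ≤ k) :
    BracketPred (assocReal x') k ↔
      x' k = 0 ∧ (∃ j, k < j ∧ x' j = 1) ∧ ∃ j, k < j ∧ x' j = 0 := by
  obtain ⟨k, rfl⟩ : ∃ j, k = j + 1 := ⟨k - 1, by omega⟩
  obtain ⟨M, hM⟩ := exists_assocReal_mul_two_pow hx' k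
  have htail := hx'.shift (k + 1)
  have hdigit : Even (2 * M + x' (k + 1)) ↔ x' (k + 1) = 0 := by
    have := hx'.le_one (i := k + 1) (by omega)
    rw [Nat.even_add, Nat.even_iff, Nat.even_iff]
    omega
  have hM' : assocReal x' * 2 ^ (k + 1) =
      ((2 * M + x' (k + 1) : ℕ) : ℝ) + assocReal (fun i => x' (i + (k + 1))) := by
    push_cast
    exact hM
  rw [bracketPred_iff hk, hM', exists_two_mul_lt_lt_two_mul_add_one_iff (assocReal_nonneg _)
    (assocReal_le_one htail), hdigit, assocReal_pos_iff htail, assocReal_lt_one_iff htail,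
    exists_one_le_shift_eq_iff, exists_one_le_shift_eq_iff]

/-- For `p ≥ 1`: `x'(4m+1) = 0`, `x'(4m+3) = 1` for all `m` and `x'(p) = 0` iff
for all `m`, `[x, 4m+1]` holds, `[x, 4m+3]` fails, and `[x, p]` holds. -/
theorem stmt11 (x' : ℕ → ℕ) (hx' : IsZeroOne x') (x : ℝ) (hx : x = assocReal x')
    (p : ℕ) (hp : 1 ≤ p) :
    ((∀ m : ℕ, x' (4 * m + 1) = 0 ∧ x' (4 * m + 3) = 1) ∧ x' p = 0) ↔
      ((∀ m : ℕ, BracketPred x (4 * m + 1) ∧ ¬ BracketPred x (4 * m + 3)) ∧ BracketPred x p) := by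
  subst hx
  have hbracket := fun k (hk : 1 ≤ k) => bracketPred_assocReal_iff hx' hk
  constructor
  · rintro ⟨halt, hp0⟩
    have hmixed : ∀ k, (∃ j, k < j ∧ x' j = 1) ∧ ∃ j, k < j ∧ x' j = 0 := fun k =>
      ⟨⟨4 * k + 3, by omega, (halt k).2⟩, ⟨4 * (k + 1) + 1, by omega, (halt (k + 1)).1⟩⟩
    refine ⟨fun m => ⟨?_, ?_⟩, ?_⟩
    · exact (hbracket _ (by omega)).2 ⟨(halt m).1, hmixed _⟩
    · rw [hbracket _ (by omega), (halt m).2]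
      exact fun h => one_ne_zero h.1
    · exact (hbracket p hp).2 ⟨hp0, hmixed p⟩
  · rintro ⟨hb, hbp⟩
    refine ⟨fun m => ⟨((hbracket _ (by omega)).1 (hb m).1).1, ?_⟩, ((hbracket p hp).1 hbp).1⟩
    obtain ⟨-, ⟨i, hi, hi1⟩, ⟨j, hj, hj0⟩⟩ :=
      (hbracket (4 * (m + 1) + 1) (by omega)).1 (hb (m + 1)).1
    rcases hx' (4 * m + 3) (by omega) with h | h
    · exact absurd ((hbracket _ (by omega)).2 ⟨h, ⟨i, by omega, hi1⟩, ⟨j, by omega, hj0⟩⟩) (hb m).2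
    · exact h
end

section
/- Fix a function e : ℕ×ℕ → ℕ which is a bijection from ℕ×ℕ onto the positive integers. Let u' be a 0–1 sequence with associated real u such that u'(4m+1) = 0 and u'(4m+3) = 1 for every m ∈ ℕ, and for every k ∈ ℕ there exists exactly one m ∈ ℕ with u'(2·e(k,m)) = 1. Then there exists exactly one function α : ℕ → ℕ such that for all k, m ∈ ℕ: α(k) = m if and only if the predicate [u, 2·e(k,m)] fails. -/
/-!
Write `x = assocReal u'` and `p ≥ 1`. Splitting the binary expansion after the `p`-th digit gives
`x · 2^p = N + f`, where `N` is the integer with binary digits `u'(1), …, u'(p)` and `f` is the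
value of the remaining digits. Since `u'` has infinitely many zeros and ones, `0 < f < 1`, so `[x, p]`
(i.e. `2q < x · 2^p < 2q + 1` for some `q`) holds exactly when `N` is even, i.e. when `u'(p) = 0`.
Hence `¬[u, 2·e(k,m)]` means `u'(2·e(k,m)) = 1`, which for each `k` singles out exactly one `m`.
-/

open Finset

lemma IsZeroOne.shift_s17 {x' : ℕ → ℕ} (h : IsZeroOne x') (p : ℕ) :
    IsZeroOne (fun i => x' (p + i)) :=
  fun i _ => h (p + i) (by omega)

lemma IsZeroOne.div_two_pow_le {x' : ℕ → ℕ} (h : IsZeroOne x') (i : ℕ) :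
    (x' (i + 1) : ℝ) / 2 ^ (i + 1) ≤ 1 / 2 ^ (i + 1) := by
  have : x' (i + 1) ≤ 1 := by rcases h (i + 1) (by omega) with h | h <;> omega
  gcongr
  exact_mod_cast this

lemma one_div_two_pow_succ_eq (i : ℕ) : (1 : ℝ) / 2 ^ (i + 1) = 1 / 2 / 2 ^ i := by
  rw [pow_succ]; ring

lemma summable_one_div_two_pow_succ : Summable (fun i : ℕ => (1 : ℝ) / 2 ^ (i + 1)) := by
  simpa only [one_div_two_pow_succ_eq] using summable_geometric_two' 1

lemma tsum_one_div_two_pow_succ : ∑' i : ℕ, (1 : ℝ) / 2 ^ (i + 1) = 1 := by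
  simpa only [one_div_two_pow_succ_eq] using tsum_geometric_two' 1

lemma IsZeroOne.summable_s17 {x' : ℕ → ℕ} (h : IsZeroOne x') :
    Summable (fun i : ℕ => (x' (i + 1) : ℝ) / 2 ^ (i + 1)) :=
  summable_one_div_two_pow_succ.of_nonneg_of_le (fun _ => by positivity) h.div_two_pow_le

lemma assocReal_pos_of_eq_one {x' : ℕ → ℕ} (h : IsZeroOne x') {j : ℕ} (hj : x' (j + 1) = 1) :
    0 < assocReal x' := by
  have hterm : (0 : ℝ) < (x' (j + 1) : ℝ) / 2 ^ (j + 1) := by rw [hj]; positivity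
  exact hterm.trans_le (h.summable_s17.le_tsum j fun _ _ => by positivity)

lemma assocReal_lt_one_of_eq_zero {x' : ℕ → ℕ} (h : IsZeroOne x') {j : ℕ} (hj : x' (j + 1) = 0) :
    assocReal x' < 1 := by
  rw [← tsum_one_div_two_pow_succ]
  refine Summable.tsum_lt_tsum_of_nonneg (i := j) (fun _ => by positivity) h.div_two_pow_le ?_
    summable_one_div_two_pow_succ
  rw [hj, Nat.cast_zero, zero_div]
  positivity

def binaryPrefix (x' : ℕ → ℕ) (p : ℕ) : ℕ := ∑ i ∈ range p, x' (i + 1) * 2 ^ (p - 1 - i)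

lemma binaryPrefix_mod_two (x' : ℕ → ℕ) {p : ℕ} (hp : 1 ≤ p) :
    binaryPrefix x' p % 2 = x' p % 2 := by
  obtain ⟨q, rfl⟩ : ∃ q, p = q + 1 := ⟨p - 1, by omega⟩
  have hdvd : 2 ∣ ∑ i ∈ range q, x' (i + 1) * 2 ^ (q + 1 - 1 - i) :=
    dvd_sum fun i hi => (dvd_pow_self 2 (by rw [mem_range] at hi; omega)).mul_left _
  rw [binaryPrefix, sum_range_succ, show q + 1 - 1 - q = 0 by omega, pow_zero, mul_one]
  omega

lemma assocReal_mul_two_pow {x' : ℕ → ℕ} (h : IsZeroOne x') (p : ℕ) :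
    assocReal x' * 2 ^ p = binaryPrefix x' p + assocReal (fun i => x' (p + i)) := by
  have hhead : (∑ i ∈ range p, (x' (i + 1) : ℝ) / 2 ^ (i + 1)) * 2 ^ p = binaryPrefix x' p := by
    rw [binaryPrefix, sum_mul]
    push_cast
    refine sum_congr rfl fun i hi => ?_
    have hp : (2 : ℝ) ^ p = 2 ^ (i + 1) * 2 ^ (p - 1 - i) := by
      rw [← pow_add]; congr 1; rw [mem_range] at hi; omega
    rw [hp]
    field_simp
  have htail : (∑' i, (x' (i + p + 1) : ℝ) / 2 ^ (i + p + 1)) * 2 ^ p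
      = assocReal (fun i => x' (p + i)) := by
    rw [← tsum_mul_right, assocReal]
    refine tsum_congr fun i => ?_
    rw [show i + p + 1 = p + (i + 1) by omega, pow_add]
    field_simp
  rw [assocReal, ← h.summable_s17.sum_add_tsum_nat_add p, add_mul, hhead, htail]

lemma bracketPred_iff_even {x f : ℝ} {p N : ℕ} (hp : 1 ≤ p) (hx : x * 2 ^ p = N + f)
    (hf₀ : 0 < f) (hf₁ : f < 1) : BracketPred x p ↔ Even N := by
  have h2p : (2 : ℝ) ^ p = 2 ^ (p - 1) * 2 := by rw [← pow_succ, Nat.sub_add_cancel hp]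
  constructor
  · rintro ⟨y, ⟨q, hq⟩, hlo, hhi⟩
    have hy : y * 2 ^ p = 2 * q := by rw [h2p, ← mul_assoc, hq, mul_comm]
    have hlo' : (2 * q : ℝ) < N + f := by
      have := mul_lt_mul_of_pos_right hlo (by positivity : (0 : ℝ) < 2 ^ p)
      rw [sub_mul, hx, hy] at this
      linarith
    have hhi' : (N + f : ℝ) < 2 * q + 1 := by
      have := mul_lt_mul_of_pos_right hhi (by positivity : (0 : ℝ) < 2 ^ p)
      rw [sub_mul, hx, hy, one_div_mul_cancel (by positivity)] at this
      linarith
    have h₁ : N < 2 * q + 1 := by exact_mod_cast (by linarith : (N : ℝ) < 2 * q + 1)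
    have h₂ : 2 * q < N + 1 := by exact_mod_cast (by linarith : (2 * q : ℝ) < N + 1)
    exact ⟨q, by omega⟩
  · rintro ⟨q, rfl⟩
    have hdiff : x - (q + q : ℕ) / 2 ^ p = f / 2 ^ p := by
      field_simp
      linarith
    refine ⟨(q + q : ℕ) / 2 ^ p, ⟨q, ?_⟩, ?_, ?_⟩
    · rw [h2p]
      push_cast
      field_simp
      ring
    · rw [hdiff]; positivity
    · rw [hdiff]; gcongr

lemma not_bracketPred_assocReal_iff {u' : ℕ → ℕ} (hu' : IsZeroOne u') (halt : Alternating u')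
    {p : ℕ} (hp : 1 ≤ p) : ¬ BracketPred (assocReal u') p ↔ u' p = 1 := by
  have hpos : 0 < assocReal (fun i => u' (p + i)) :=
    assocReal_pos_of_eq_one (hu'.shift_s17 p) (j := 3 * p + 2) <| by
      rw [show p + (3 * p + 2 + 1) = 4 * p + 3 by omega]; exact (halt p).2
  have hlt : assocReal (fun i => u' (p + i)) < 1 :=
    assocReal_lt_one_of_eq_zero (hu'.shift_s17 p) (j := 3 * p) <| by
      rw [show p + (3 * p + 1) = 4 * p + 1 by omega]; exact (halt p).1
  rw [bracketPred_iff_even hp (assocReal_mul_two_pow hu' p) hpos hlt, Nat.even_iff,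
    binaryPrefix_mod_two u' hp]
  rcases hu' p hp with h | h <;> simp [h]

lemma existsUnique_fun_of_forall_existsUnique {α β : Type*} {P : α → β → Prop}
    (h : ∀ a, ∃! b, P a b) : ∃! f : α → β, ∀ a b, f a = b ↔ P a b := by
  choose f hf huniq using h
  refine ⟨f, fun a b => ⟨fun hb => hb ▸ hf a, fun hb => (huniq a b hb).symm⟩, fun g hg => ?_⟩
  funext a
  exact huniq a (g a) ((hg a (g a)).mp rfl)

theorem stmt17_general (e : ℕ × ℕ → ℕ)
    (hrange : Set.range e = {n : ℕ | 1 ≤ n})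
    (u' : ℕ → ℕ) (hu' : IsZeroOne u') (u : ℝ) (hu : u = assocReal u')
    (halt : Alternating u')
    (hcode : ∀ k : ℕ, ∃! m : ℕ, u' (2 * e (k, m)) = 1) :
    ∃! α : ℕ → ℕ, ∀ k m : ℕ, α k = m ↔ ¬ BracketPred u (2 * e (k, m)) := by
  have he : ∀ k m, 1 ≤ e (k, m) := fun k m => by
    have : e (k, m) ∈ Set.range e := Set.mem_range_self (k, m)
    rwa [hrange] at this
  have hbracket : ∀ k m, ¬ BracketPred u (2 * e (k, m)) ↔ u' (2 * e (k, m)) = 1 :=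
    fun k m => hu ▸ not_bracketPred_assocReal_iff hu' halt (by linarith [he k m])
  simp_rw [hbracket]
  exact existsUnique_fun_of_forall_existsUnique hcode

/-- If `u'` is an alternating 0–1 sequence such that for every `k` there is exactly
one `m` with `u'(2·e(k,m)) = 1`, then there is exactly one `α : ℕ → ℕ` with
`α(k) = m ↔ ¬[u, 2·e(k,m)]` for all `k, m`. -/
theorem stmt17 (e : ℕ × ℕ → ℕ) (hinj : Function.Injective e)
    (hrange : Set.range e = {n : ℕ | 1 ≤ n})
    (u' : ℕ → ℕ) (hu' : IsZeroOne u') (u : ℝ) (hu : u = assocReal u')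
    (halt : Alternating u')
    (hcode : ∀ k : ℕ, ∃! m : ℕ, u' (2 * e (k, m)) = 1) :
    ∃! α : ℕ → ℕ, ∀ k m : ℕ, α k = m ↔ ¬ BracketPred u (2 * e (k, m)) :=
  stmt17_general e hrange u' hu' u hu halt hcode
end
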